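/- arXiv:2509.15471 — 5 statements merged into one kernel-verified Lean document; each statement's English description precedes it below -/
import Mathlib

section
/- Let f(w) = (1/2)⟨w, Aw⟩ − ⟨b, w⟩ + c be a quadratic function on ℝⁿ with A symmetric positive definite. Let x ∈ ℝⁿ with g := ∇f(x) ≠ 0, let t := 2‖g‖²/⟨g, Ag⟩, y := x − t·g, and h := ∇f(y). Assume g and h are linearly independent, and define Δ := ⟨h, Ah⟩⟨g, Ag⟩ − ⟨g, Ah⟩², α := (⟨h, g⟩⟨g, Ah⟩ − ⟨g, g⟩⟨h, Ah⟩)/Δ, β := (−⟨h, g⟩⟨g, Ag⟩ + ⟨g, g⟩⟨h, Ag⟩)/Δ, and p := x + α·g + β·h. Then p minimizes f on the two-dimensional affine space Π = { x + α'·g + β'·h : α', β' ∈ ℝ }; that is, f(p) ≤ f(x + α'·g + β'·h) for all α', β' ∈ ℝ. -/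
/-!
Expanding `f` around `p` gives `f (p + w) = f p + ⟪w, A p - b⟫ + ½⟪w, A w⟫`, so `p` minimizes `f`
on `p + span {g, h}` as soon as the gradient `A p - b` is orthogonal to `g` and `h`. With
`A p - b = g + α A g + β A h` these are two linear equations in `α, β` whose determinant `Δ` is
the Gram determinant of `g, h` for the inner product `⟪u, A v⟫`; it is positive because `g, h`
are independent, and Cramer's rule gives exactly the stated `α, β`.
-/

open Matrix

section
variable {ι : Type*} [Fintype ι] {A : Matrix ι ι ℝ}

theorem Matrix.IsSymm.dotProduct_mulVec_comm (hA : A.IsSymm) (u v : ι → ℝ) :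
    u ⬝ᵥ A *ᵥ v = v ⬝ᵥ A *ᵥ u := by
  rw [dotProduct_mulVec, ← mulVec_transpose, hA.eq, dotProduct_comm]

variable {b : ι → ℝ} {c : ℝ} {f : (ι → ℝ) → ℝ}

theorem quadratic_apply_add (hA : A.IsSymm) (hf : ∀ w, f w = (1/2) * (w ⬝ᵥ A *ᵥ w) - b ⬝ᵥ w + c)
    (x u : ι → ℝ) : f (x + u) = f x + u ⬝ᵥ (A *ᵥ x - b) + (1/2) * (u ⬝ᵥ A *ᵥ u) := by
  simp only [hf, mulVec_add, dotProduct_add, add_dotProduct, dotProduct_sub,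
    hA.dotProduct_mulVec_comm x u, dotProduct_comm b u]
  ring

theorem quadratic_apply_le_apply_add (hA : A.PosSemidef)
    (hf : ∀ w, f w = (1/2) * (w ⬝ᵥ A *ᵥ w) - b ⬝ᵥ w + c) {p w : ι → ℝ}
    (hw : w ⬝ᵥ (A *ᵥ p - b) = 0) : f p ≤ f (p + w) := by
  have hAw : 0 ≤ w ⬝ᵥ A *ᵥ w := by simpa using hA.dotProduct_mulVec_nonneg w
  rw [quadratic_apply_add (isHermitian_iff_isSymm.mp hA.isHermitian) hf, hw]
  linarith

theorem Matrix.PosDef.gram_det_pos (hA : A.PosDef) {u v : ι → ℝ}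
    (huv : LinearIndependent ℝ ![u, v]) :
    0 < (v ⬝ᵥ A *ᵥ v) * (u ⬝ᵥ A *ᵥ u) - (u ⬝ᵥ A *ᵥ v) ^ 2 := by
  have hAs : A.IsSymm := isHermitian_iff_isSymm.mp hA.isHermitian
  have hpos : ∀ w ≠ 0, 0 < w ⬝ᵥ A *ᵥ w := fun w hw => by
    simpa using hA.dotProduct_mulVec_pos hw
  have hu : 0 < u ⬝ᵥ A *ᵥ u := hpos u (huv.ne_zero 0)
  -- `w` is `A`-orthogonal to `u`, so its `A`-norm is a multiple of the Gram determinant.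
  set w := (-(u ⬝ᵥ A *ᵥ v)) • u + (u ⬝ᵥ A *ᵥ u) • v
  have hw : w ≠ 0 := fun h0 => hu.ne' (LinearIndependent.pair_iff.mp huv _ _ h0).2
  have hquad : w ⬝ᵥ A *ᵥ w
      = (u ⬝ᵥ A *ᵥ u) * ((v ⬝ᵥ A *ᵥ v) * (u ⬝ᵥ A *ᵥ u) - (u ⬝ᵥ A *ᵥ v) ^ 2) := by
    simp only [w, mulVec_add, mulVec_smul, dotProduct_add, add_dotProduct, dotProduct_smul,
      smul_dotProduct, smul_eq_mul, hAs.dotProduct_mulVec_comm v u]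
    ring
  exact pos_of_mul_pos_right (hquad ▸ hpos w hw) hu.le

end

theorem stmt3_general {n : ℕ} (A : Matrix (Fin n) (Fin n) ℝ) (hA : A.PosDef)
    (b : Fin n → ℝ) (c : ℝ) (f : (Fin n → ℝ) → ℝ)
    (hf : ∀ w, f w = (1/2) * (w ⬝ᵥ A.mulVec w) - b ⬝ᵥ w + c)
    (x g : Fin n → ℝ) (hg : g = A.mulVec x - b)
    (h : Fin n → ℝ)
    (hindep : LinearIndependent ℝ ![g, h])
    (Δ α β : ℝ)
    (hΔ : Δ = (h ⬝ᵥ A.mulVec h) * (g ⬝ᵥ A.mulVec g) - (g ⬝ᵥ A.mulVec h) ^ 2)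
    (hα : α = ((h ⬝ᵥ g) * (g ⬝ᵥ A.mulVec h) - (g ⬝ᵥ g) * (h ⬝ᵥ A.mulVec h)) / Δ)
    (hβ : β = (-(h ⬝ᵥ g) * (g ⬝ᵥ A.mulVec g) + (g ⬝ᵥ g) * (h ⬝ᵥ A.mulVec g)) / Δ)
    (p : Fin n → ℝ) (hp : p = x + α • g + β • h) :
    ∀ α' β' : ℝ, f p ≤ f (x + α' • g + β' • h) := by
  intro α' β'
  have hAs : A.IsSymm := isHermitian_iff_isSymm.mp hA.isHermitian
  have hΔ0 : Δ ≠ 0 := hΔ ▸ (hA.gram_det_pos hindep).ne'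
  have hgrad : A *ᵥ p - b = g + α • A *ᵥ g + β • A *ᵥ h := by
    rw [hp, hg, mulVec_add, mulVec_add, mulVec_smul, mulVec_smul]
    abel
  have hg_perp : g ⬝ᵥ (A *ᵥ p - b) = 0 := by
    simp only [hgrad, dotProduct_add, dotProduct_smul, smul_eq_mul]
    rw [hα, hβ, hAs.dotProduct_mulVec_comm h g]
    field_simp
    linear_combination (g ⬝ᵥ g) * hΔ
  have hh_perp : h ⬝ᵥ (A *ᵥ p - b) = 0 := by
    simp only [hgrad, dotProduct_add, dotProduct_smul, smul_eq_mul]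
    rw [hα, hβ, hAs.dotProduct_mulVec_comm h g, dotProduct_comm h g]
    field_simp
    linear_combination (g ⬝ᵥ h) * hΔ
  have hplane : x + α' • g + β' • h = p + ((α' - α) • g + (β' - β) • h) := by
    rw [hp]; module
  rw [hplane]
  refine quadratic_apply_le_apply_add hA.posSemidef hf ?_
  simp only [add_dotProduct, smul_dotProduct, hg_perp, hh_perp, smul_zero, add_zero]

/-- With the same setup as Statement 2, the ellipcenter point
`p = x + α·g + β·h` minimizes `f` over the affine plane
`Π = { x + α'·g + β'·h : α', β' ∈ ℝ }`. -/
theorem stmt3 {n : ℕ} (A : Matrix (Fin n) (Fin n) ℝ) (hA : A.PosDef)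
    (b : Fin n → ℝ) (c : ℝ) (f : (Fin n → ℝ) → ℝ)
    (hf : ∀ w, f w = (1/2) * (w ⬝ᵥ A.mulVec w) - b ⬝ᵥ w + c)
    (x g : Fin n → ℝ) (hg : g = A.mulVec x - b) (hg0 : g ≠ 0)
    (t : ℝ) (ht : t = 2 * (g ⬝ᵥ g) / (g ⬝ᵥ A.mulVec g))
    (y : Fin n → ℝ) (hy : y = x - t • g)
    (h : Fin n → ℝ) (hh : h = A.mulVec y - b)
    (hindep : LinearIndependent ℝ ![g, h])
    (Δ α β : ℝ)
    (hΔ : Δ = (h ⬝ᵥ A.mulVec h) * (g ⬝ᵥ A.mulVec g) - (g ⬝ᵥ A.mulVec h) ^ 2)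
    (hα : α = ((h ⬝ᵥ g) * (g ⬝ᵥ A.mulVec h) - (g ⬝ᵥ g) * (h ⬝ᵥ A.mulVec h)) / Δ)
    (hβ : β = (-(h ⬝ᵥ g) * (g ⬝ᵥ A.mulVec g) + (g ⬝ᵥ g) * (h ⬝ᵥ A.mulVec g)) / Δ)
    (p : Fin n → ℝ) (hp : p = x + α • g + β • h) :
    ∀ α' β' : ℝ, f p ≤ f (x + α' • g + β' • h) :=
  stmt3_general A hA b c f hf x g hg h hindep Δ α β hΔ hα hβ p hp
end

section
/- (Kantorovich inequality) Let A be an n×n real symmetric positive definite matrix with eigenvalues 0 < λ₁ ≤ λ₂ ≤ … ≤ λₙ, where λ₁ is the smallest and λₙ the largest eigenvalue. Then for every nonzero vector y ∈ ℝⁿ, (⟨y, y⟩)² / (⟨y, Ay⟩ · ⟨y, A⁻¹y⟩) ≥ 4λ₁λₙ / (λ₁ + λₙ)². -/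
open Matrix

/-- **Kantorovich inequality.** For `A` symmetric positive definite with
smallest eigenvalue `λ₁` and largest eigenvalue `λₙ`, and any `y ≠ 0`,
`⟨y, y⟩² / (⟨y, Ay⟩ ⟨y, A⁻¹y⟩) ≥ 4λ₁λₙ/(λ₁ + λₙ)²`. -/
theorem stmt6 {n : ℕ} (A : Matrix (Fin n) (Fin n) ℝ) (hA : A.PosDef)
    (lam1 lamn : ℝ)
    (hlam1 : IsLeast (Set.range hA.1.eigenvalues) lam1)
    (hlamn : IsGreatest (Set.range hA.1.eigenvalues) lamn)
    (y : Fin n → ℝ) (hy : y ≠ 0) :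
    (y ⬝ᵥ y) ^ 2 / ((y ⬝ᵥ A.mulVec y) * (y ⬝ᵥ A⁻¹.mulVec y)) ≥
      4 * lam1 * lamn / (lam1 + lamn) ^ 2 := by
  have hH := hA.1
  set d := hH.eigenvalues with hd
  set U : Matrix (Fin n) (Fin n) ℝ := (hH.eigenvectorUnitary : Matrix (Fin n) (Fin n) ℝ) with hU
  have hdpos : ∀ i, 0 < d i := hA.eigenvalues_pos
  obtain ⟨i0, hi0⟩ := hlam1.1
  have hl1pos : 0 < lam1 := hi0 ▸ hdpos i0
  obtain ⟨j0, hj0⟩ := hlamn.1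
  have hlnpos : 0 < lamn := hj0 ▸ hdpos j0
  have hle : ∀ i, lam1 ≤ d i := fun i => hlam1.2 ⟨i, rfl⟩
  have hge : ∀ i, d i ≤ lamn := fun i => hlamn.2 ⟨i, rfl⟩
  set c := lam1 * lamn with hc
  have hcpos : 0 < c := mul_pos hl1pos hlnpos
  -- spectral theorem
  have hspec : A = U * diagonal d * star U := by
    have := hH.spectral_theorem
    simpa using this
  have hUU : U * star U = 1 := Matrix.mem_unitaryGroup_iff.mp hH.eigenvectorUnitary.2
  have hUU' : star U * U = 1 := Matrix.mem_unitaryGroup_iff'.mp hH.eigenvectorUnitary.2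
  have hDD : diagonal d * diagonal (fun i => (d i)⁻¹) = 1 := by
    rw [diagonal_mul_diagonal]
    have : (fun i => d i * (d i)⁻¹) = fun _ => (1:ℝ) :=
      funext fun i => mul_inv_cancel₀ (hdpos i).ne'
    rw [this, diagonal_one]
  have hinv : A⁻¹ = U * diagonal (fun i => (d i)⁻¹) * star U := by
    apply inv_eq_right_inv
    rw [hspec]
    simp only [Matrix.mul_assoc]
    rw [← Matrix.mul_assoc (star U) U, hUU', one_mul,
      ← Matrix.mul_assoc (diagonal d), hDD, one_mul, hUU]
  set e : Fin n → ℝ := fun i => (lam1 + lamn) - d i - c * (d i)⁻¹ with he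
  have hB : (lam1 + lamn) • (1 : Matrix (Fin n) (Fin n) ℝ) - A - c • A⁻¹
      = U * diagonal e * star U := by
    rw [hinv, hspec, ← hUU]
    have h1 : diagonal e = (lam1 + lamn) • (1 : Matrix (Fin n) (Fin n) ℝ)
        - diagonal d - c • diagonal (fun i => (d i)⁻¹) := by
      ext i j
      rcases eq_or_ne i j with rfl | h
      · simp [Matrix.diagonal_apply_eq, Matrix.one_apply_eq, he]
      · simp [Matrix.diagonal_apply_ne _ h, Matrix.one_apply_ne h]
    rw [h1]
    simp [Matrix.mul_sub, Matrix.sub_mul, Matrix.mul_smul, Matrix.smul_mul]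
  have hepos : ∀ i, 0 ≤ e i := by
    intro i
    have h1 := hle i; have h2 := hge i; have h3 := hdpos i
    have key : 0 ≤ d i * ((lam1 + lamn) - d i - c * (d i)⁻¹) := by
      have hcd : d i * (c * (d i)⁻¹) = c := by field_simp
      nlinarith [mul_nonneg (sub_nonneg.mpr h1) (sub_nonneg.mpr h2)]
    exact nonneg_of_mul_nonneg_right key h3
  have hBpsd : ((lam1 + lamn) • (1 : Matrix (Fin n) (Fin n) ℝ) - A - c • A⁻¹).PosSemidef := by
    rw [hB]
    have hdiag : (diagonal e).PosSemidef := Matrix.posSemidef_diagonal_iff.mpr hepos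
    have h2 := hdiag.mul_mul_conjTranspose_same U
    simpa [Matrix.star_eq_conjTranspose] using h2
  have hkey : y ⬝ᵥ A *ᵥ y + c * (y ⬝ᵥ A⁻¹ *ᵥ y) ≤ (lam1 + lamn) * (y ⬝ᵥ y) := by
    have h0 := hBpsd.re_dotProduct_nonneg y
    simp only [star_trivial, RCLike.re_to_real, Matrix.sub_mulVec,
      Matrix.smul_mulVec, dotProduct_sub, dotProduct_smul, Matrix.one_mulVec,
      smul_eq_mul] at h0
    linarith
  have ha : 0 < y ⬝ᵥ A *ᵥ y := by
    have := hA.re_dotProduct_pos hy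
    simpa using this
  have hb : 0 < y ⬝ᵥ A⁻¹ *ᵥ y := by
    have := hA.inv.re_dotProduct_pos hy
    simpa using this
  have hs : 0 < y ⬝ᵥ y := by
    rcases lt_or_eq_of_le (Finset.sum_nonneg fun i _ => mul_self_nonneg (y i)) with h | h
    · exact h
    · exact absurd (dotProduct_self_eq_zero.mp h.symm) hy
  rw [ge_iff_le, div_le_div_iff₀ (by positivity) (mul_pos ha hb)]
  nlinarith [sq_nonneg (y ⬝ᵥ A *ᵥ y - c * (y ⬝ᵥ A⁻¹ *ᵥ y)),
    mul_le_mul hkey hkey (by positivity) (by positivity),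
    mul_pos ha hb, hs.le]
end

section
/- Let f(w) = (1/2)⟨w, Aw⟩ − ⟨b, w⟩ + c be a quadratic function on ℝⁿ with A symmetric positive definite, smallest eigenvalue λ₁ and largest eigenvalue λₙ, and unique minimizer x* = A⁻¹b. Let x ∈ ℝⁿ with g := ∇f(x) ≠ 0 and let t* := ‖g‖²/⟨g, Ag⟩ be the optimal step size. Then f(x − t*·g) − f(x*) ≤ ((λₙ − λ₁)/(λₙ + λ₁))² · (f(x) − f(x*)). -/
open Matrix

/-! Write `e = x − x*`, so that `g = Ae` and `f(x − t g) − f(x*) = ½⟨e, Ae⟩ − t‖g‖² + ½t²⟨g, Ag⟩`.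
The exact line search does at least as well as the fixed step `t₀ = 2/(λ₁ + λₙ)`, and the value
at `t₀` is bounded by `((λₙ − λ₁)/(λₙ + λ₁))² · ½⟨e, Ae⟩` because the cubic
`λ(λ − λ₁)(λₙ − λ)` is nonnegative on the spectrum of `A`, i.e.
`λ₁λₙ⟨e, Ae⟩ + ⟨e, A³e⟩ ≤ (λ₁ + λₙ)⟨e, A²e⟩`. -/

namespace Matrix

variable {n : Type*} [Fintype n]

section Spectral

open scoped MatrixOrder

lemma PosSemidef.dotProduct_mulVec_cubic_le [DecidableEq n] {A : Matrix n n ℝ}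
    (hA : A.PosSemidef) {l L : ℝ} (hl : ∀ i, l ≤ hA.1.eigenvalues i)
    (hL : ∀ i, hA.1.eigenvalues i ≤ L) (v : n → ℝ) :
    l * L * (v ⬝ᵥ A *ᵥ v) + v ⬝ᵥ (A * A * A) *ᵥ v ≤ (l + L) * (v ⬝ᵥ (A * A) *ᵥ v) := by
  have hnonneg : 0 ≤ cfc (fun x : ℝ => x * (x - l) * (L - x)) A := by
    refine cfc_nonneg fun x hx => ?_
    rw [hA.1.spectrum_real_eq_range_eigenvalues] at hx
    obtain ⟨i, rfl⟩ := hx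
    have := hA.eigenvalues_nonneg i
    have := hl i
    have := hL i
    positivity
  have hcfc : cfc (fun x : ℝ => x * (x - l) * (L - x)) A
      = A * (A - algebraMap ℝ _ l) * (algebraMap ℝ _ L - A) := by
    rw [cfc_mul .., cfc_mul .., cfc_sub .., cfc_sub .., cfc_id' .., cfc_const .., cfc_const ..]
  have hquad := (nonneg_iff_posSemidef.mp hnonneg).dotProduct_mulVec_nonneg v
  rw [hcfc] at hquad
  simp only [star_trivial, Algebra.algebraMap_eq_smul_one, mul_sub, sub_mul, mul_smul_comm,
    smul_mul_assoc, mul_one, sub_mulVec, smul_mulVec, dotProduct_sub, dotProduct_smul,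
    smul_eq_mul] at hquad
  linarith

end Spectral

variable {A : Matrix n n ℝ}

lemma IsSymm.dotProduct_mulVec_comm_s7 (hA : A.IsSymm) (u w : n → ℝ) :
    u ⬝ᵥ A *ᵥ w = w ⬝ᵥ A *ᵥ u := by
  simpa only [hA.eq] using dotProduct_transpose_mulVec A u w

lemma IsSymm.dotProduct_mulVec_mul (hA : A.IsSymm) (B : Matrix n n ℝ) (v : n → ℝ) :
    v ⬝ᵥ (A * B) *ᵥ v = (A *ᵥ v) ⬝ᵥ B *ᵥ v := by
  rw [← mulVec_mulVec, hA.dotProduct_mulVec_comm_s7, dotProduct_comm]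

lemma IsSymm.quadratic_sub_quadratic_eq (hA : A.IsSymm) {b xstar : n → ℝ}
    (hxstar : A *ᵥ xstar = b) (c : ℝ) (w : n → ℝ) :
    (1/2 * (w ⬝ᵥ A *ᵥ w) - b ⬝ᵥ w + c) - (1/2 * (xstar ⬝ᵥ A *ᵥ xstar) - b ⬝ᵥ xstar + c)
      = 1/2 * ((w - xstar) ⬝ᵥ A *ᵥ (w - xstar)) := by
  have hcross : xstar ⬝ᵥ A *ᵥ w = w ⬝ᵥ A *ᵥ xstar := hA.dotProduct_mulVec_comm_s7 xstar w
  simp only [mulVec_sub, sub_dotProduct, dotProduct_sub, hcross, hxstar, dotProduct_comm b]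
  ring

lemma IsSymm.dotProduct_mulVec_sub_smul (hA : A.IsSymm) (e g : n → ℝ) (t : ℝ) :
    (e - t • g) ⬝ᵥ A *ᵥ (e - t • g)
      = e ⬝ᵥ A *ᵥ e - 2 * t * (g ⬝ᵥ A *ᵥ e) + t ^ 2 * (g ⬝ᵥ A *ᵥ g) := by
  have hcross : e ⬝ᵥ A *ᵥ g = g ⬝ᵥ A *ᵥ e := hA.dotProduct_mulVec_comm_s7 e g
  simp only [mulVec_sub, mulVec_smul, sub_dotProduct, dotProduct_sub, smul_dotProduct,
    dotProduct_smul, smul_eq_mul, hcross]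
  ring

end Matrix

lemma quadratic_at_vertex_le {α β a : ℝ} (ha : 0 < a) (t : ℝ) :
    α - β / a * β + (β / a) ^ 2 / 2 * a ≤ α - t * β + t ^ 2 / 2 * a := by
  have hgap : α - t * β + t ^ 2 / 2 * a - (α - β / a * β + (β / a) ^ 2 / 2 * a)
      = (t * a - β) ^ 2 / (2 * a) := by
    field_simp
    ring
  have : 0 ≤ (t * a - β) ^ 2 / (2 * a) := by positivity
  linarith

/-- The hypothesis says that the fixed step `2/(l + L)` already achieves the bound. -/
lemma exact_line_search_le {E G₂ G₃ l L : ℝ} (hG₃ : 0 < G₃) (hlL : 0 < l + L)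
    (h : l * L * E + G₃ ≤ (l + L) * G₂) :
    E / 2 - G₂ / G₃ * G₂ + (G₂ / G₃) ^ 2 / 2 * G₃ ≤ ((L - l) / (L + l)) ^ 2 * (E / 2) := by
  have hfixed : E / 2 - 2 / (l + L) * G₂ + (2 / (l + L)) ^ 2 / 2 * G₃
      - ((L - l) / (L + l)) ^ 2 * (E / 2)
      = 2 / (l + L) ^ 2 * (l * L * E + G₃ - (l + L) * G₂) := by
    rw [add_comm L l]
    field_simp
    ring
  have : 2 / (l + L) ^ 2 * (l * L * E + G₃ - (l + L) * G₂) ≤ 0 :=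
    mul_nonpos_of_nonneg_of_nonpos (by positivity) (by linarith)
  linarith [quadratic_at_vertex_le (α := E / 2) (β := G₂) hG₃ (2 / (l + L))]

/-- One step of the gradient method with optimal step size
`t* = ‖g‖²/⟨g, Ag⟩` satisfies
`f(x − t*·g) − f(x*) ≤ ((λₙ − λ₁)/(λₙ + λ₁))² (f(x) − f(x*))`,
where `x* = A⁻¹b` and `λ₁, λₙ` are the smallest and largest eigenvalues of `A`. -/
theorem stmt7 {n : ℕ} (A : Matrix (Fin n) (Fin n) ℝ) (hA : A.PosDef)
    (lam1 lamn : ℝ)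
    (hlam1 : IsLeast (Set.range hA.1.eigenvalues) lam1)
    (hlamn : IsGreatest (Set.range hA.1.eigenvalues) lamn)
    (b : Fin n → ℝ) (c : ℝ) (f : (Fin n → ℝ) → ℝ)
    (hf : ∀ w, f w = (1/2) * (w ⬝ᵥ A.mulVec w) - b ⬝ᵥ w + c)
    (xstar : Fin n → ℝ) (hxstar : xstar = A⁻¹.mulVec b)
    (x g : Fin n → ℝ) (hg : g = A.mulVec x - b) (hg0 : g ≠ 0)
    (tstar : ℝ) (htstar : tstar = (g ⬝ᵥ g) / (g ⬝ᵥ A.mulVec g)) :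
    f (x - tstar • g) - f xstar ≤
      ((lamn - lam1) / (lamn + lam1)) ^ 2 * (f x - f xstar) := by
  have hsymm : A.IsSymm := isHermitian_iff_isSymm.mp hA.1
  have hAxstar : A *ᵥ xstar = b := by
    rw [hxstar, mulVec_mulVec, mul_nonsing_inv _ hA.det_pos.ne'.isUnit, one_mulVec]
  set e := x - xstar
  have hAe : A *ᵥ e = g := by rw [mulVec_sub, hAxstar, hg]
  have hline : ∀ t : ℝ, f (x - t • g) - f xstar
      = e ⬝ᵥ A *ᵥ e / 2 - t * (g ⬝ᵥ g) + t ^ 2 / 2 * (g ⬝ᵥ A *ᵥ g) := by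
    intro t
    rw [hf, hf, hsymm.quadratic_sub_quadratic_eq hAxstar, sub_right_comm,
      hsymm.dotProduct_mulVec_sub_smul, hAe]
    ring
  have hA2 : e ⬝ᵥ (A * A) *ᵥ e = g ⬝ᵥ g := by rw [hsymm.dotProduct_mulVec_mul, hAe]
  have hA3 : e ⬝ᵥ (A * A * A) *ᵥ e = g ⬝ᵥ A *ᵥ g := by
    rw [Matrix.mul_assoc, hsymm.dotProduct_mulVec_mul, ← mulVec_mulVec, hAe]
  have hcubic := hA.posSemidef.dotProduct_mulVec_cubic_le
    (fun i => hlam1.2 ⟨i, rfl⟩) (fun i => hlamn.2 ⟨i, rfl⟩) e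
  rw [hA2, hA3] at hcubic
  have hlam1_pos : 0 < lam1 := hlam1.1.choose_spec ▸ hA.eigenvalues_pos _
  have hlamn_pos : 0 < lamn := hlamn.1.choose_spec ▸ hA.eigenvalues_pos _
  have hfx : f x - f xstar = e ⬝ᵥ A *ᵥ e / 2 := by simpa using hline 0
  rw [hline, htstar, hfx]
  exact exact_line_search_le (by simpa using hA.dotProduct_mulVec_pos hg0) (by linarith) hcubic
end

section
/- Let f(w) = (1/2)⟨w, Aw⟩ − ⟨b, w⟩ + c be a quadratic function on ℝⁿ with A symmetric positive definite, smallest eigenvalue λ₁, largest eigenvalue λₙ, and unique minimizer x* = A⁻¹b. Let (xᵏ)ₖ≥₀ be a sequence in ℝⁿ such that for every k: if ∇f(xᵏ) = 0 then xᵏ⁺¹ = xᵏ, and if ∇f(xᵏ) ≠ 0 then f(xᵏ⁺¹) ≤ f(xᵏ − t*ₖ·∇f(xᵏ)) where t*ₖ := ‖∇f(xᵏ)‖²/⟨∇f(xᵏ), A∇f(xᵏ)⟩ (this holds for the iterates of the Method of Ellipcenters, since each iterate minimizes f on an affine plane containing the optimal-step gradient point). Then with η := 1 − λ₁/λₙ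 ∈ [0,1), for all k ≥ 0, f(xᵏ) − f(x*) ≤ ηᵏ · (f(x⁰) − f(x*)). -/
/-!
Write `e = w - x*` and `g = ∇f(w) = A e`. Then `f(w) - f(x*) = ⟨e, A e⟩ / 2`, and the exact line
search along `-g` lowers `f` by `‖g‖⁴ / (2 ⟨g, A g⟩)`. The Rayleigh bound `⟨g, A g⟩ ≤ λₙ ‖g‖²`,
together with `λ₁ ⟨e, A e⟩ ≤ ‖g‖²` (expand `‖g - λ₁ e‖² ≥ 0` and use `λ₁ ‖e‖² ≤ ⟨e, A e⟩`), shows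
that this decrease is at least `(λ₁ / λₙ) (f(w) - f(x*))`. Any step doing at least as well
contracts the suboptimality by `η = 1 - λ₁ / λₙ`, and iterating gives the rate.
-/

open Matrix

theorem OrthonormalBasis.dotProduct_eq_sum {ι κ : Type*} [Fintype ι] [Fintype κ]
    (B : OrthonormalBasis κ ℝ (EuclideanSpace ℝ ι)) (x y : ι → ℝ) :
    x ⬝ᵥ y = ∑ i, (B i ⬝ᵥ x) * (B i ⬝ᵥ y) := by
  have h := B.sum_inner_mul_inner (WithLp.toLp 2 x) (WithLp.toLp 2 y)
  simp only [EuclideanSpace.inner_eq_star_dotProduct, star_trivial] at h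
  rw [dotProduct_comm, ← h]
  exact Finset.sum_congr rfl fun i _ => by rw [dotProduct_comm y]

namespace Matrix

variable {ι : Type*} [Fintype ι]

theorem IsSymm.dotProduct_mulVec_comm_s8 {α : Type*} [CommSemiring α] {A : Matrix ι ι α}
    (hA : A.IsSymm) (u v : ι → α) : u ⬝ᵥ A *ᵥ v = A *ᵥ u ⬝ᵥ v := by
  rw [dotProduct_mulVec, ← vecMul_transpose, hA.eq]

theorem mul_dotProduct_mulVec_le_of_mul_dotProduct_self_le {A : Matrix ι ι ℝ} {m : ℝ}
    (hm : 0 ≤ m) {e : ι → ℝ} (he : m * (e ⬝ᵥ e) ≤ e ⬝ᵥ A *ᵥ e) :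
    m * (e ⬝ᵥ A *ᵥ e) ≤ A *ᵥ e ⬝ᵥ A *ᵥ e := by
  have hsq : 0 ≤ (A *ᵥ e - m • e) ⬝ᵥ (A *ᵥ e - m • e) := by
    simpa using dotProduct_self_star_nonneg (A *ᵥ e - m • e)
  simp only [dotProduct_sub, sub_dotProduct, dotProduct_smul, smul_dotProduct, smul_eq_mul,
    dotProduct_comm (A *ᵥ e) e] at hsq
  nlinarith [mul_le_mul_of_nonneg_left he hm]

section Hermitian

variable [DecidableEq ι] {A : Matrix ι ι ℝ}

theorem IsHermitian.dotProduct_mulVec_eq_sum (hA : A.IsHermitian) (v : ι → ℝ) :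
    v ⬝ᵥ A *ᵥ v = ∑ i, hA.eigenvalues i * (hA.eigenvectorBasis i ⬝ᵥ v) ^ 2 := by
  rw [hA.eigenvectorBasis.dotProduct_eq_sum]
  refine Finset.sum_congr rfl fun i _ => ?_
  rw [(isHermitian_iff_isSymm.1 hA).dotProduct_mulVec_comm_s8, hA.mulVec_eigenvectorBasis,
    smul_dotProduct, smul_eq_mul]
  ring

theorem IsHermitian.dotProduct_mulVec_le (hA : A.IsHermitian) {M : ℝ}
    (hM : ∀ i, hA.eigenvalues i ≤ M) (v : ι → ℝ) : v ⬝ᵥ A *ᵥ v ≤ M * (v ⬝ᵥ v) := by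
  rw [hA.dotProduct_mulVec_eq_sum, hA.eigenvectorBasis.dotProduct_eq_sum, Finset.mul_sum]
  exact Finset.sum_le_sum fun i _ => by
    rw [← sq]; exact mul_le_mul_of_nonneg_right (hM i) (sq_nonneg _)

theorem IsHermitian.mul_dotProduct_self_le (hA : A.IsHermitian) {m : ℝ}
    (hm : ∀ i, m ≤ hA.eigenvalues i) (v : ι → ℝ) : m * (v ⬝ᵥ v) ≤ v ⬝ᵥ A *ᵥ v := by
  rw [hA.dotProduct_mulVec_eq_sum, hA.eigenvectorBasis.dotProduct_eq_sum, Finset.mul_sum]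
  exact Finset.sum_le_sum fun i _ => by
    rw [← sq]; exact mul_le_mul_of_nonneg_right (hm i) (sq_nonneg _)

end Hermitian

end Matrix

noncomputable section QuadraticFunction

variable {ι : Type*} [Fintype ι]

def quadraticFunction (A : Matrix ι ι ℝ) (b : ι → ℝ) (c : ℝ) (w : ι → ℝ) : ℝ :=
  (1/2) * (w ⬝ᵥ A.mulVec w) - b ⬝ᵥ w + c

def steepestDescentStep (A : Matrix ι ι ℝ) (b w : ι → ℝ) : ι → ℝ :=
  w - ((A *ᵥ w - b) ⬝ᵥ (A *ᵥ w - b) / ((A *ᵥ w - b) ⬝ᵥ A *ᵥ (A *ᵥ w - b))) • (A *ᵥ w - b)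

variable {A : Matrix ι ι ℝ} {b : ι → ℝ} {c : ℝ}

theorem quadraticFunction_sub_smul (hA : A.IsSymm) (w u : ι → ℝ) (t : ℝ) :
    quadraticFunction A b c (w - t • u) =
      quadraticFunction A b c w - t * ((A *ᵥ w - b) ⬝ᵥ u) + t ^ 2 / 2 * (u ⬝ᵥ A *ᵥ u) := by
  simp only [quadraticFunction, mulVec_sub, mulVec_smul, dotProduct_sub, sub_dotProduct,
    dotProduct_smul, smul_dotProduct, smul_eq_mul, hA.dotProduct_mulVec_comm_s8 w u,
    dotProduct_comm u (A *ᵥ w)]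
  ring

theorem quadraticFunction_sub_of_mulVec_eq (hA : A.IsSymm) {x : ι → ℝ} (hx : A *ᵥ x = b)
    (w : ι → ℝ) :
    quadraticFunction A b c w - quadraticFunction A b c x = (w - x) ⬝ᵥ A *ᵥ (w - x) / 2 := by
  have h := quadraticFunction_sub_smul (b := b) (c := c) hA x (x - w) 1
  rw [one_smul, sub_sub_cancel, hx, sub_self, zero_dotProduct, ← neg_sub w x, neg_dotProduct,
    mulVec_neg, dotProduct_neg, neg_neg] at h
  rw [h]
  ring

theorem quadraticFunction_steepestDescentStep (hA : A.IsSymm) {w g : ι → ℝ}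
    (hg : A *ᵥ w - b = g) (hgA : g ⬝ᵥ A *ᵥ g ≠ 0) :
    quadraticFunction A b c (steepestDescentStep A b w) =
      quadraticFunction A b c w - (g ⬝ᵥ g) ^ 2 / (2 * (g ⬝ᵥ A *ᵥ g)) := by
  rw [steepestDescentStep, hg, quadraticFunction_sub_smul hA, hg]
  field_simp
  ring

theorem quadraticFunction_steepestDescentStep_sub_le [DecidableEq ι] (hA : A.IsHermitian)
    {m M : ℝ} (hm0 : 0 < m) (hm : ∀ i, m ≤ hA.eigenvalues i) (hM : ∀ i, hA.eigenvalues i ≤ M)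
    {x w : ι → ℝ} (hx : A *ᵥ x = b) (hw : A *ᵥ w - b ≠ 0) :
    quadraticFunction A b c (steepestDescentStep A b w) - quadraticFunction A b c x ≤
      (1 - m / M) * (quadraticFunction A b c w - quadraticFunction A b c x) := by
  have hAs : A.IsSymm := isHermitian_iff_isSymm.1 hA
  set g := A *ᵥ w - b with hg
  have hge : g = A *ᵥ (w - x) := by rw [mulVec_sub, hx]
  have hs : 0 < g ⬝ᵥ g := by simpa using dotProduct_self_star_pos_iff.2 hw
  have haM : g ⬝ᵥ A *ᵥ g ≤ M * (g ⬝ᵥ g) := hA.dotProduct_mulVec_le hM g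
  have ham : m * (g ⬝ᵥ g) ≤ g ⬝ᵥ A *ᵥ g := hA.mul_dotProduct_self_le hm g
  have hq : m * ((w - x) ⬝ᵥ A *ᵥ (w - x)) ≤ g ⬝ᵥ g := by
    rw [hge]
    exact mul_dotProduct_mulVec_le_of_mul_dotProduct_self_le hm0.le
      (hA.mul_dotProduct_self_le hm _)
  have ha : 0 < g ⬝ᵥ A *ᵥ g := (mul_pos hm0 hs).trans_le ham
  have hM0 : 0 < M := pos_of_mul_pos_left (ha.trans_le haM) hs.le
  rw [quadraticFunction_steepestDescentStep hAs hg.symm ha.ne', sub_right_comm,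
    quadraticFunction_sub_of_mulVec_eq hAs hx, sub_mul, one_mul]
  refine sub_le_sub_left ?_ _
  calc m / M * ((w - x) ⬝ᵥ A *ᵥ (w - x) / 2) = m * ((w - x) ⬝ᵥ A *ᵥ (w - x)) / M / 2 := by ring
    _ ≤ g ⬝ᵥ g / M / 2 := by gcongr
    _ ≤ (g ⬝ᵥ g) ^ 2 / (g ⬝ᵥ A *ᵥ g) / 2 := by
      gcongr ?_ / 2
      rw [div_le_div_iff₀ hM0 ha]
      nlinarith
    _ = (g ⬝ᵥ g) ^ 2 / (2 * (g ⬝ᵥ A *ᵥ g)) := by ring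

end QuadraticFunction

/-- For any sequence `(xᵏ)` such that `xᵏ⁺¹ = xᵏ` whenever
`∇f(xᵏ) = 0`, and `f(xᵏ⁺¹) ≤ f(xᵏ − t*ₖ ∇f(xᵏ))` (with `t*ₖ` the optimal step)
whenever `∇f(xᵏ) ≠ 0`, the rate `η := 1 − λ₁/λₙ` lies in `[0, 1)` and
`f(xᵏ) − f(x*) ≤ ηᵏ (f(x⁰) − f(x*))` for all `k ≥ 0`. -/
theorem stmt8 {n : ℕ} (A : Matrix (Fin n) (Fin n) ℝ) (hA : A.PosDef)
    (lam1 lamn : ℝ)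
    (hlam1 : IsLeast (Set.range hA.1.eigenvalues) lam1)
    (hlamn : IsGreatest (Set.range hA.1.eigenvalues) lamn)
    (b : Fin n → ℝ) (c : ℝ) (f : (Fin n → ℝ) → ℝ)
    (hf : ∀ w, f w = (1/2) * (w ⬝ᵥ A.mulVec w) - b ⬝ᵥ w + c)
    (xstar : Fin n → ℝ) (hxstar : xstar = A⁻¹.mulVec b)
    (x : ℕ → Fin n → ℝ)
    (hstep0 : ∀ k, A.mulVec (x k) - b = 0 → x (k + 1) = x k)
    (hstep : ∀ k, A.mulVec (x k) - b ≠ 0 →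
      f (x (k + 1)) ≤
        f (x k - (((A.mulVec (x k) - b) ⬝ᵥ (A.mulVec (x k) - b)) /
            ((A.mulVec (x k) - b) ⬝ᵥ A.mulVec (A.mulVec (x k) - b))) • (A.mulVec (x k) - b)))
    (η : ℝ) (hη : η = 1 - lam1 / lamn) :
    η ∈ Set.Ico (0 : ℝ) 1 ∧
      ∀ k : ℕ, f (x k) - f xstar ≤ η ^ k * (f (x 0) - f xstar) := by
  have hf' : f = quadraticFunction A b c := funext hf
  subst hf' hη
  obtain ⟨⟨i₁, hi₁⟩, hlam1_le⟩ := hlam1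
  have hlam1_pos : 0 < lam1 := hi₁ ▸ hA.eigenvalues_pos i₁
  have hlam1_lamn : lam1 ≤ lamn := hlamn.2 ⟨i₁, hi₁⟩
  have hm : ∀ i, lam1 ≤ hA.1.eigenvalues i := fun i => hlam1_le ⟨i, rfl⟩
  have hM : ∀ i, hA.1.eigenvalues i ≤ lamn := fun i => hlamn.2 ⟨i, rfl⟩
  have hAs : A.IsSymm := isHermitian_iff_isSymm.1 hA.1
  have hxstar_min : A *ᵥ xstar = b := by
    rw [hxstar, mulVec_mulVec, mul_nonsing_inv A hA.det_pos.ne'.isUnit, one_mulVec]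
  have hrate : 0 ≤ 1 - lam1 / lamn :=
    sub_nonneg.2 ((div_le_one (hlam1_pos.trans_le hlam1_lamn)).2 hlam1_lamn)
  refine ⟨⟨hrate, sub_lt_self _ (div_pos hlam1_pos (hlam1_pos.trans_le hlam1_lamn))⟩,
    fun k => le_geom (u := fun k => quadraticFunction A b c (x k) - quadraticFunction A b c xstar)
      hrate k fun j _ => ?_⟩
  by_cases hg : A *ᵥ x j - b = 0
  · rw [hstep0 j hg, quadraticFunction_sub_of_mulVec_eq hAs hxstar_min, mulVec_sub, hxstar_min,
      hg, dotProduct_zero, zero_div, mul_zero]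
  · exact (sub_le_sub_right (hstep j hg) _).trans
      (quadraticFunction_steepestDescentStep_sub_le hA.1 hlam1_pos hm hM hxstar_min hg)
end

section
/- Let f : ℝⁿ → ℝ be differentiable and μ-strongly convex for some μ > 0 (with respect to a norm on ℝⁿ). Let x ∈ ℝⁿ with ∇f(x) ≠ 0. Then there exists exactly one t > 0 such that f(x − t·∇f(x)) = f(x). -/
/-!
Along the ray `t ↦ x - t • ∇f(x)` the function `φ t = f (x - t • ∇f(x))` of one real variable is
strongly convex with modulus `m = μ * nrm (∇f(x)) ^ 2 > 0`, and `φ'(0) = -‖∇f(x)‖² < 0`. So `φ`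
dips below `φ 0` just after `0`, while the tangent parabola `φ 0 + φ'(0) t + (m / 2) t²` forces
`φ t > φ 0` for large `t`; the intermediate value theorem gives a solution of `φ t = φ 0`, and
strict convexity forbids two: with `0 < t₁ < t₂`, the secant slopes over `[0, t₁]` and
`[t₁, t₂]` would both vanish.
-/

open Set Filter Topology

lemma exists_gt_lt_of_hasDerivAt_neg {φ : ℝ → ℝ} {d a : ℝ} (hφ : HasDerivAt φ d a)
    (hd : d < 0) : ∃ t, a < t ∧ φ t < φ a := by
  have hslope : ∀ᶠ t in 𝓝[>] a, slope φ a t < 0 :=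
    (hφ.tendsto_slope.mono_left (nhdsGT_le_nhdsNE a)).eventually (eventually_lt_nhds hd)
  obtain ⟨t, hneg, hat⟩ := (hslope.and self_mem_nhdsWithin).exists
  refine ⟨t, hat, ?_⟩
  rw [slope_def_field] at hneg
  exact sub_neg.mp (neg_of_div_neg_left hneg (sub_pos.mpr hat).le)

lemma StrongConvexOn.add_mul_sub_add_sq_le {φ : ℝ → ℝ} {m d a t : ℝ}
    (hφ : StrongConvexOn univ m φ) (hd : HasDerivAt φ d a) (hat : a < t) :
    φ a + d * (t - a) + m / 2 * (t - a) ^ 2 ≤ φ t := by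
  have hconv : ConvexOn ℝ univ fun s ↦ φ s - m / 2 * s ^ 2 := by
    simpa only [Real.norm_eq_abs, sq_abs] using strongConvexOn_iff_convex.mp hφ
  have hderiv : HasDerivAt (fun s ↦ φ s - m / 2 * s ^ 2) (d - m * a) a := by
    have hsq : HasDerivAt (fun s : ℝ ↦ m / 2 * s ^ 2) (m * a) a :=
      ((hasDerivAt_pow 2 a).const_mul (m / 2)).congr_deriv (by push_cast; ring)
    exact hd.sub hsq
  have hslope := hconv.le_slope_of_hasDerivAt (mem_univ a) (mem_univ t) hat hderiv
  rw [slope_def_field, le_div_iff₀ (sub_pos.mpr hat)] at hslope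
  nlinarith

lemma StrictConvexOn.eq_of_lt_of_map_eq {φ : ℝ → ℝ} {s : Set ℝ} (hφ : StrictConvexOn ℝ s φ)
    {a t₁ t₂ : ℝ} (ha : a ∈ s) (ht₁ : t₁ ∈ s) (ht₂ : t₂ ∈ s) (hat₁ : a < t₁) (hat₂ : a < t₂)
    (hφ₁ : φ t₁ = φ a) (hφ₂ : φ t₂ = φ a) : t₁ = t₂ := by
  have not_lt : ∀ u ∈ s, ∀ v ∈ s, a < u → φ u = φ a → φ v = φ a → ¬u < v := by
    intro u hu v hv hau hφu hφv huv
    have := hφ.slope_strict_mono_adjacent ha hv hau huv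
    simp [hφu, hφv] at this
  rcases lt_trichotomy t₁ t₂ with h | h | h
  · exact (not_lt t₁ ht₁ t₂ ht₂ hat₁ hφ₁ hφ₂ h).elim
  · exact h
  · exact (not_lt t₂ ht₂ t₁ ht₁ hat₂ hφ₂ hφ₁ h).elim

theorem StrongConvexOn.existsUnique_gt_map_eq_of_hasDerivAt_neg {φ : ℝ → ℝ} {m d a : ℝ}
    (hφ : StrongConvexOn univ m φ) (hm : 0 < m) (hd : HasDerivAt φ d a) (hd₀ : d < 0) :
    ∃! t, a < t ∧ φ t = φ a := by
  have hstrict := hφ.strictConvexOn hm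
  obtain ⟨t₀, hat₀, hφt₀⟩ := exists_gt_lt_of_hasDerivAt_neg hd hd₀
  -- The tangent parabola exceeds `φ a` beyond `a - 2 * d / m`, and `T` lies beyond it and `t₀`.
  set s := -4 * d / m
  have hs : 0 < s := div_pos (by linarith) hm
  have hms : m * s = -4 * d := mul_div_cancel₀ _ hm.ne'
  set T := t₀ + s
  have ht₀T : t₀ < T := lt_add_of_pos_right t₀ hs
  have hφT : φ a < φ T := by
    have htangent := hφ.add_mul_sub_add_sq_le hd (hat₀.trans ht₀T)
    have hslope : 0 < d + m / 2 * (T - a) := by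
      nlinarith [mul_pos hm (sub_pos.mpr hat₀)]
    nlinarith [mul_pos (sub_pos.mpr (hat₀.trans ht₀T)) hslope]
  have hcont : Continuous φ := hstrict.convexOn.locallyLipschitz.continuous
  obtain ⟨t, ⟨ht₀t, -⟩, hφt⟩ :=
    intermediate_value_Ioo ht₀T.le hcont.continuousOn ⟨hφt₀, hφT⟩
  refine ⟨t, ⟨hat₀.trans ht₀t, hφt⟩, fun u ⟨hau, hφu⟩ ↦ ?_⟩
  exact hstrict.eq_of_lt_of_map_eq (mem_univ a) (mem_univ u) (mem_univ t) hau
    (hat₀.trans ht₀t) hφu hφt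

lemma strongConvexOn_comp_add_smul {E : Type*} [AddCommGroup E] [Module ℝ E]
    {f : E → ℝ} {μ : ℝ} (nrm : Seminorm ℝ E)
    (hf : ∀ x z : E, ∀ t : ℝ, t ∈ Icc (0 : ℝ) 1 →
      f (t • x + (1 - t) • z) ≤ t * f x + (1 - t) * f z - (μ / 2) * t * (1 - t) * (nrm (x - z)) ^ 2)
    (x v : E) :
    StrongConvexOn univ (μ * nrm v ^ 2) fun t : ℝ ↦ f (x + t • v) := by
  refine ⟨convex_univ, fun s _ u _ a b ha hb hab ↦ ?_⟩
  obtain rfl : b = 1 - a := eq_sub_of_add_eq' hab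
  have hpoint : x + (a • s + (1 - a) • u) • v = a • (x + s • v) + (1 - a) • (x + u • v) := by
    simp only [smul_eq_mul]
    module
  have hdist : nrm (x + s • v - (x + u • v)) = ‖s - u‖ * nrm v := by
    rw [add_sub_add_left_eq_sub, ← sub_smul, map_smul_eq_mul]
  have h := hf (x + s • v) (x + u • v) a ⟨ha, by linarith⟩
  rw [← hpoint, hdist] at h
  simp only [smul_eq_mul] at h ⊢
  linarith

/-- For `f : ℝⁿ → ℝ` differentiable and `μ`-strongly convex (with
respect to any norm on ℝⁿ), and `x` with `∇f(x) ≠ 0`, there is exactly one `t > 0`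
such that `f(x − t·∇f(x)) = f(x)`. -/
theorem stmt13 {n : ℕ} (f : EuclideanSpace ℝ (Fin n) → ℝ)
    (hdiff : Differentiable ℝ f) (μ : ℝ) (hμ : 0 < μ)
    (nrm : Seminorm ℝ (EuclideanSpace ℝ (Fin n))) (hnrm : ∀ w, nrm w = 0 → w = 0)
    (hsc : ∀ x z : EuclideanSpace ℝ (Fin n), ∀ t : ℝ, t ∈ Set.Icc (0 : ℝ) 1 →
      f (t • x + (1 - t) • z) ≤
        t * f x + (1 - t) * f z - (μ / 2) * t * (1 - t) * (nrm (x - z)) ^ 2)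
    (x : EuclideanSpace ℝ (Fin n)) (hgx : gradient f x ≠ 0) :
    ∃! t : ℝ, 0 < t ∧ f (x - t • gradient f x) = f x := by
  set g := gradient f x
  have hnrm_g : 0 < nrm (-g) :=
    (apply_nonneg nrm _).lt_of_ne fun h ↦ hgx (neg_eq_zero.mp (hnrm _ h.symm))
  have hnorm_g : 0 < ‖g‖ := norm_pos_iff.mpr hgx
  have hline : HasDerivAt (fun t : ℝ ↦ f (x + t • -g)) (-‖g‖ ^ 2) 0 := by
    have h := (hdiff x).hasGradientAt.hasFDerivAt.hasLineDerivAt (-g)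
    rwa [InnerProductSpace.toDual_apply_apply, inner_neg_right, real_inner_self_eq_norm_sq] at h
  have hφ := strongConvexOn_comp_add_smul nrm hsc x (-g)
  have hroot := hφ.existsUnique_gt_map_eq_of_hasDerivAt_neg (by positivity) hline
    (neg_neg_of_pos (by positivity))
  simpa [← sub_eq_add_neg] using hroot
end
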